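/- arXiv:2210.07389 — 2 statements merged into one kernel-verified Lean document; each statement's English description precedes it below -/
import Mathlib

section
/- The four 'exceptional block' cylinder identities hold: I_A(3,7,5,1) = I_H(3,5,1,1), I_A(3,7,6,2) = I_H(3,5,1,2), I_A(6,2,3,7) = I_H(6,4,8,7), and I_A(6,2,4,8) = I_H(6,4,8,8). -/
/-- The compactified translation `T̃ = k ∘ T ∘ k⁻¹`, `T(x) = x + 1`, on `[-1,1)`. -/
noncomputable def Ttilde (x : ℝ) : ℝ :=
  if x ≤ -1/2 then -2 - 1/x
  else if x ≤ 0 then (1 + 2*x) / (2 + 3*x)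
  else 1 / (2 - x)

/-- The compactified inversion `S̃ = k ∘ S ∘ k⁻¹`, `S(x) = -1/x`, on `[-1,1)`. -/
noncomputable def Stilde (x : ℝ) : ℝ :=
  if x < 0 then x + 1 else if x = 0 then -1 else x - 1

/-- The compactified inverse translation `T̃⁻¹ = k ∘ T⁻¹ ∘ k⁻¹` on `[-1,1)`. -/
noncomputable def Tinvtilde (x : ℝ) : ℝ :=
  if x ≤ 0 then -1 / (2 + x)
  else if x ≤ 1/2 then (1 - 2*x) / (3*x - 2)
  else 2 - 1/x

/-- The Artin map `f̃_A : [-1,1) → [-1,1)`. -/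
noncomputable def fA (x : ℝ) : ℝ :=
  if x < -1/2 then Ttilde x
  else if x < 1/2 then Stilde x
  else Tinvtilde x

/-- The Hurwitz map `f̃_H : [-1,1) → [-1,1)`. -/
noncomputable def fH (x : ℝ) : ℝ :=
  if x < -1/3 then Ttilde x
  else if x < 1/3 then Stilde x
  else Tinvtilde x

def J1 : Set ℝ := Set.Ico (-1) (-2/3)
def J2 : Set ℝ := Set.Ico (-2/3) (-1/2)
def J3 : Set ℝ := Set.Ico (-1/2) (-1/3)
def J4 : Set ℝ := Set.Ico (-1/3) 0
def J5 : Set ℝ := Set.Ico 0 (1/3)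
def J6 : Set ℝ := Set.Ico (1/3) (1/2)
def J7 : Set ℝ := Set.Ico (1/2) (2/3)
def J8 : Set ℝ := Set.Ico (2/3) 1

/-!
On `J3` the Artin map follows the branches `S̃, T̃⁻¹, S̃` and the Hurwitz map the branches
`T̃, S̃, T̃`; both composites are the Möbius map `x ↦ x/(x+1)`. On `J6` the branches are
`S̃, T̃, S̃` and `T̃⁻¹, S̃, T̃⁻¹`, both composing to `x ↦ x/(1-x)`. Along the Hurwitz orbit
the second and third symbols are forced, and along the Artin orbit the third symbol is
determined by the fourth, because there `f̃_A` is a translation by `∓1`. Hence each cylinder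
is `J ∩ f⁻³(J')` with the same third iterate on both sides.
-/

open Set Function

lemma inter_preimage_iterate_three_eq {α : Type*} {f : α → α} {J K L M : Set α}
    (hK : MapsTo f J K) (hL : ∀ ⦃x⦄, x ∈ J → f^[3] x ∈ M → f^[2] x ∈ L) :
    J ∩ f ⁻¹' K ∩ f^[2] ⁻¹' L ∩ f^[3] ⁻¹' M = J ∩ f^[3] ⁻¹' M := by
  ext x
  simp only [mem_inter_iff, mem_preimage]
  constructor
  · rintro ⟨⟨⟨hx, -⟩, -⟩, hM⟩
    exact ⟨hx, hM⟩
  · rintro ⟨hx, hM⟩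
    exact ⟨⟨⟨hx, hK hx⟩, hL hx hM⟩, hM⟩

section Branches

variable {y : ℝ}

lemma fA_of_mem_Ico_neg_half_zero (hy : y ∈ Ico (-1/2) 0) : fA y = y + 1 := by
  obtain ⟨h₁, h₂⟩ := hy
  rw [fA, if_neg (by linarith), if_pos (by linarith), Stilde, if_pos h₂]

-- `S̃ 0 = -1` fits the formula `y - 1`, so `0` needs no separate case.
lemma fA_of_mem_Ico_zero_half (hy : y ∈ Ico 0 (1/2)) : fA y = y - 1 := by
  obtain ⟨h₁, h₂⟩ := hy
  rw [fA, if_neg (by linarith), if_pos h₂, Stilde, if_neg (by linarith)]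
  split_ifs with h
  · rw [h]; norm_num
  · rfl

lemma fA_of_lt_neg_half (hy : y < -1/2) : fA y = -2 - 1/y := by
  rw [fA, if_pos hy, Ttilde, if_pos hy.le]

-- At `y = 1/2` the middle branch of `T̃⁻¹` also gives `0 = 2 - 1/(1/2)`.
lemma fA_of_half_le (hy : 1/2 ≤ y) : fA y = 2 - 1/y := by
  rw [fA, if_neg (by linarith), if_neg (by linarith), Tinvtilde, if_neg (by linarith)]
  split_ifs with h
  · rw [show y = 1/2 by linarith]; norm_num
  · rfl

-- At `y = -1/2` the first branch of `T̃` also gives `0 = (1 + 2y)/(2 + 3y)`.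
lemma fH_of_mem_J3 (hy : y ∈ J3) : fH y = (1 + 2*y) / (2 + 3*y) := by
  obtain ⟨h₁, h₂⟩ := hy
  rw [fH, if_pos h₂, Ttilde, if_pos (by linarith : y ≤ 0)]
  split_ifs with h
  · rw [show y = -1/2 by linarith]; norm_num
  · rfl

lemma fH_of_mem_J4 (hy : y ∈ J4) : fH y = y + 1 := by
  obtain ⟨h₁, h₂⟩ := hy
  rw [fH, if_neg (by linarith), if_pos (by linarith), Stilde, if_pos h₂]

lemma fH_of_mem_J5 (hy : y ∈ J5) : fH y = y - 1 := by
  obtain ⟨h₁, h₂⟩ := hy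
  rw [fH, if_neg (by linarith), if_pos h₂, Stilde, if_neg (by linarith)]
  split_ifs with h
  · rw [h]; norm_num
  · rfl

lemma fH_of_mem_J6 (hy : y ∈ J6) : fH y = (1 - 2*y) / (3*y - 2) := by
  obtain ⟨h₁, h₂⟩ := hy
  rw [fH, if_neg (by linarith), if_neg (by linarith), Tinvtilde, if_neg (by linarith),
    if_pos h₂.le]

lemma fH_of_le_neg_half (hy : y ≤ -1/2) : fH y = -2 - 1/y := by
  rw [fH, if_pos (by linarith), Ttilde, if_pos hy]

lemma fH_of_half_lt (hy : 1/2 < y) : fH y = 2 - 1/y := by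
  rw [fH, if_neg (by linarith), if_neg (by linarith), Tinvtilde, if_neg (by linarith),
    if_neg (by linarith)]

end Branches

section ArtinOrbits

variable {x : ℝ}

lemma fA_of_mem_J3 (hx : x ∈ J3) : fA x = x + 1 :=
  fA_of_mem_Ico_neg_half_zero ⟨hx.1, by linarith [hx.2]⟩

lemma fA_mem_J7_of_mem_J3 (hx : x ∈ J3) : fA x ∈ J7 := by
  obtain ⟨h₁, h₂⟩ := hx
  rw [fA_of_mem_J3 ⟨h₁, h₂⟩, J7, mem_Ico]
  constructor <;> linarith

lemma fA_iterate_two_of_mem_J3 (hx : x ∈ J3) : fA^[2] x = 2 - 1/(x + 1) := by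
  rw [iterate_succ_apply', iterate_one, fA_of_mem_J3 hx, fA_of_half_le (by linarith [hx.1])]

lemma fA_iterate_two_mem_Ico_of_mem_J3 (hx : x ∈ J3) : fA^[2] x ∈ Ico 0 (1/2) := by
  obtain ⟨h₁, h₂⟩ := hx
  have hpos : 0 < x + 1 := by linarith
  have h₃ : 1/(x + 1) ≤ 2 := by rw [div_le_iff₀ hpos]; linarith
  have h₄ : 3/2 < 1/(x + 1) := by rw [lt_div_iff₀ hpos]; linarith
  rw [fA_iterate_two_of_mem_J3 ⟨h₁, h₂⟩, mem_Ico]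
  constructor <;> linarith

lemma fA_iterate_three_of_mem_J3 (hx : x ∈ J3) : fA^[3] x = x / (x + 1) := by
  have hne : x + 1 ≠ 0 := by linarith [hx.1]
  rw [iterate_succ_apply', fA_of_mem_Ico_zero_half (fA_iterate_two_mem_Ico_of_mem_J3 hx),
    fA_iterate_two_of_mem_J3 hx]
  field_simp
  ring

lemma fA_iterate_two_mem_J5_of_iterate_three_mem_J1 (hx : x ∈ J3)
    (h : fA^[3] x ∈ J1) : fA^[2] x ∈ J5 := by
  have hy := fA_iterate_two_mem_Ico_of_mem_J3 hx
  rw [iterate_succ_apply', fA_of_mem_Ico_zero_half hy, J1, mem_Ico] at h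
  exact ⟨hy.1, by linarith [h.2]⟩

lemma fA_iterate_two_mem_J6_of_iterate_three_mem_J2 (hx : x ∈ J3)
    (h : fA^[3] x ∈ J2) : fA^[2] x ∈ J6 := by
  have hy := fA_iterate_two_mem_Ico_of_mem_J3 hx
  rw [iterate_succ_apply', fA_of_mem_Ico_zero_half hy, J2, mem_Ico] at h
  exact ⟨by linarith [h.1], hy.2⟩

lemma fA_of_mem_J6 (hx : x ∈ J6) : fA x = x - 1 :=
  fA_of_mem_Ico_zero_half ⟨by linarith [hx.1], hx.2⟩

lemma fA_mem_J2_of_mem_J6 (hx : x ∈ J6) : fA x ∈ J2 := by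
  obtain ⟨h₁, h₂⟩ := hx
  rw [fA_of_mem_J6 ⟨h₁, h₂⟩, J2, mem_Ico]
  constructor <;> linarith

lemma fA_iterate_two_of_mem_J6 (hx : x ∈ J6) : fA^[2] x = -2 - 1/(x - 1) := by
  rw [iterate_succ_apply', iterate_one, fA_of_mem_J6 hx, fA_of_lt_neg_half (by linarith [hx.2])]

lemma fA_iterate_two_mem_Ico_of_mem_J6 (hx : x ∈ J6) : fA^[2] x ∈ Ico (-1/2) 0 := by
  obtain ⟨h₁, h₂⟩ := hx
  have hneg : x - 1 < 0 := by linarith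
  have h₃ : 1/(x - 1) ≤ -3/2 := by rw [div_le_iff_of_neg hneg]; linarith
  have h₄ : -2 < 1/(x - 1) := by rw [lt_div_iff_of_neg hneg]; linarith
  rw [fA_iterate_two_of_mem_J6 ⟨h₁, h₂⟩, mem_Ico]
  constructor <;> linarith

lemma fA_iterate_three_of_mem_J6 (hx : x ∈ J6) : fA^[3] x = x / (1 - x) := by
  have hne : 1 - x ≠ 0 := by linarith [hx.2]
  have hne' : x - 1 ≠ 0 := by linarith [hx.2]
  rw [iterate_succ_apply', fA_of_mem_Ico_neg_half_zero (fA_iterate_two_mem_Ico_of_mem_J6 hx),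
    fA_iterate_two_of_mem_J6 hx]
  field_simp
  ring

lemma fA_iterate_two_mem_J3_of_iterate_three_mem_J7 (hx : x ∈ J6)
    (h : fA^[3] x ∈ J7) : fA^[2] x ∈ J3 := by
  have hy := fA_iterate_two_mem_Ico_of_mem_J6 hx
  rw [iterate_succ_apply', fA_of_mem_Ico_neg_half_zero hy, J7, mem_Ico] at h
  exact ⟨hy.1, by linarith [h.2]⟩

lemma fA_iterate_two_mem_J4_of_iterate_three_mem_J8 (hx : x ∈ J6)
    (h : fA^[3] x ∈ J8) : fA^[2] x ∈ J4 := by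
  have hy := fA_iterate_two_mem_Ico_of_mem_J6 hx
  rw [iterate_succ_apply', fA_of_mem_Ico_neg_half_zero hy, J8, mem_Ico] at h
  exact ⟨by linarith [h.1], hy.2⟩

end ArtinOrbits

section HurwitzOrbits

variable {x : ℝ}

lemma fH_mem_J1_of_mem_J5 (hx : x ∈ J5) : fH x ∈ J1 := by
  obtain ⟨h₁, h₂⟩ := hx
  rw [fH_of_mem_J5 ⟨h₁, h₂⟩, J1, mem_Ico]
  constructor <;> linarith

lemma fH_mem_J8_of_mem_J4 (hx : x ∈ J4) : fH x ∈ J8 := by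
  obtain ⟨h₁, h₂⟩ := hx
  rw [fH_of_mem_J4 ⟨h₁, h₂⟩, J8, mem_Ico]
  constructor <;> linarith

lemma fH_mem_J5_of_mem_J3 (hx : x ∈ J3) : fH x ∈ J5 := by
  obtain ⟨h₁, h₂⟩ := hx
  have hpos : 0 < 2 + 3*x := by linarith
  rw [fH_of_mem_J3 ⟨h₁, h₂⟩, J5, mem_Ico, le_div_iff₀ hpos, div_lt_iff₀ hpos]
  constructor <;> linarith

lemma fH_mem_J4_of_mem_J6 (hx : x ∈ J6) : fH x ∈ J4 := by
  obtain ⟨h₁, h₂⟩ := hx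
  have hneg : 3*x - 2 < 0 := by linarith
  rw [fH_of_mem_J6 ⟨h₁, h₂⟩, J4, mem_Ico, le_div_iff_of_neg hneg, div_lt_iff_of_neg hneg]
  constructor <;> linarith

lemma fH_iterate_two_mem_J1_of_mem_J3 (hx : x ∈ J3) : fH^[2] x ∈ J1 :=
  fH_mem_J1_of_mem_J5 (fH_mem_J5_of_mem_J3 hx)

lemma fH_iterate_two_mem_J8_of_mem_J6 (hx : x ∈ J6) : fH^[2] x ∈ J8 :=
  fH_mem_J8_of_mem_J4 (fH_mem_J4_of_mem_J6 hx)

lemma fH_iterate_three_of_mem_J3 (hx : x ∈ J3) : fH^[3] x = x / (x + 1) := by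
  have hle : fH^[2] x ≤ -1/2 := by linarith [(fH_iterate_two_mem_J1_of_mem_J3 hx).2]
  have h₁ : 2 + 3*x ≠ 0 := by linarith [hx.1]
  have h₂ : x + 1 ≠ 0 := by linarith [hx.1]
  have h₃ : 1 + 2*x - (2 + 3*x) ≠ 0 := by linarith [hx.1]
  rw [iterate_succ_apply', fH_of_le_neg_half hle, iterate_succ_apply', iterate_one,
    fH_of_mem_J5 (fH_mem_J5_of_mem_J3 hx), fH_of_mem_J3 hx, div_sub_one h₁, one_div_div]
  field_simp
  ring

lemma fH_iterate_three_of_mem_J6 (hx : x ∈ J6) : fH^[3] x = x / (1 - x) := by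
  have hlt : 1/2 < fH^[2] x := by linarith [(fH_iterate_two_mem_J8_of_mem_J6 hx).1]
  have h₁ : 3*x - 2 ≠ 0 := by linarith [hx.2]
  have h₂ : 1 - x ≠ 0 := by linarith [hx.2]
  have h₃ : 1 - 2*x + (3*x - 2) ≠ 0 := by linarith [hx.2]
  rw [iterate_succ_apply', fH_of_half_lt hlt, iterate_succ_apply', iterate_one,
    fH_of_mem_J4 (fH_mem_J4_of_mem_J6 hx), fH_of_mem_J6 hx, div_add_one h₁, one_div_div]
  field_simp
  ring

end HurwitzOrbits

/-- The four "exceptional block" cylinder identities: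
`I_A(3,7,5,1) = I_H(3,5,1,1)`, `I_A(3,7,6,2) = I_H(3,5,1,2)`,
`I_A(6,2,3,7) = I_H(6,4,8,7)`, `I_A(6,2,4,8) = I_H(6,4,8,8)`,
where `I_A(ω₀,…,ω_n) = ⋂ᵢ f̃_A⁻ⁱ(J_{ωᵢ})` and similarly for `I_H`. -/
theorem exceptional_block_identities :
    (J3 ∩ fA ⁻¹' J7 ∩ fA^[2] ⁻¹' J5 ∩ fA^[3] ⁻¹' J1 =
      J3 ∩ fH ⁻¹' J5 ∩ fH^[2] ⁻¹' J1 ∩ fH^[3] ⁻¹' J1) ∧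
    (J3 ∩ fA ⁻¹' J7 ∩ fA^[2] ⁻¹' J6 ∩ fA^[3] ⁻¹' J2 =
      J3 ∩ fH ⁻¹' J5 ∩ fH^[2] ⁻¹' J1 ∩ fH^[3] ⁻¹' J2) ∧
    (J6 ∩ fA ⁻¹' J2 ∩ fA^[2] ⁻¹' J3 ∩ fA^[3] ⁻¹' J7 =
      J6 ∩ fH ⁻¹' J4 ∩ fH^[2] ⁻¹' J8 ∩ fH^[3] ⁻¹' J7) ∧
    (J6 ∩ fA ⁻¹' J2 ∩ fA^[2] ⁻¹' J4 ∩ fA^[3] ⁻¹' J8 =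
      J6 ∩ fH ⁻¹' J4 ∩ fH^[2] ⁻¹' J8 ∩ fH^[3] ⁻¹' J8) := by
  have hJ3 : EqOn fA^[3] fH^[3] J3 := fun x hx =>
    (fA_iterate_three_of_mem_J3 hx).trans (fH_iterate_three_of_mem_J3 hx).symm
  have hJ6 : EqOn fA^[3] fH^[3] J6 := fun x hx =>
    (fA_iterate_three_of_mem_J6 hx).trans (fH_iterate_three_of_mem_J6 hx).symm
  refine ⟨?_, ?_, ?_, ?_⟩
  · rw [inter_preimage_iterate_three_eq (fun _ => fA_mem_J7_of_mem_J3)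
        (fun _ => fA_iterate_two_mem_J5_of_iterate_three_mem_J1),
      inter_preimage_iterate_three_eq (fun _ => fH_mem_J5_of_mem_J3)
        (fun _ hx _ => fH_iterate_two_mem_J1_of_mem_J3 hx)]
    exact hJ3.inter_preimage_eq J1
  · rw [inter_preimage_iterate_three_eq (fun _ => fA_mem_J7_of_mem_J3)
        (fun _ => fA_iterate_two_mem_J6_of_iterate_three_mem_J2),
      inter_preimage_iterate_three_eq (fun _ => fH_mem_J5_of_mem_J3)
        (fun _ hx _ => fH_iterate_two_mem_J1_of_mem_J3 hx)]
    exact hJ3.inter_preimage_eq J2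
  · rw [inter_preimage_iterate_three_eq (fun _ => fA_mem_J2_of_mem_J6)
        (fun _ => fA_iterate_two_mem_J3_of_iterate_three_mem_J7),
      inter_preimage_iterate_three_eq (fun _ => fH_mem_J4_of_mem_J6)
        (fun _ hx _ => fH_iterate_two_mem_J8_of_mem_J6 hx)]
    exact hJ6.inter_preimage_eq J7
  · rw [inter_preimage_iterate_three_eq (fun _ => fA_mem_J2_of_mem_J6)
        (fun _ => fA_iterate_two_mem_J4_of_iterate_three_mem_J8),
      inter_preimage_iterate_three_eq (fun _ => fH_mem_J4_of_mem_J6)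
        (fun _ hx _ => fH_iterate_two_mem_J8_of_mem_J6 hx)]
    exact hJ6.inter_preimage_eq J8
end

section
/- Both the Artin map f̃_A and the Hurwitz map f̃_H are topologically transitive on [-1,1): for every pair of nonempty relatively open subsets U, V of [-1,1) there exists an integer n ≥ 0 such that f̃^n(U) ∩ V ≠ ∅ (where f̃ denotes f̃_A, respectively f̃_H). -/
/-!
Both maps are piecewise Möbius: on each piece of a partition of `[-1, 1)` into half-open
intervals they agree with some `y ↦ (α y + β) / (γ y + δ)` with `α δ - β γ = 1`. Such a branch
is increasing and continuous, so the map sends right neighbourhoods of a point onto right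
neighbourhoods of its image. On a fraction `a / b` the branches `T̃^{±1}` lower the denominator,
so the orbit of every rational point ends at the fixed point `-1`. Hence some iterate of a
nonempty open `U` contains an interval `[-1, t)`. Near its parabolic fixed point `-1` the branch
`T̃` pushes `[-1, s)` onto `[-1, T̃ s)` with `T̃ s ≥ s + (t + 1)²`, so finitely many steps give
`[-1, 0)`, and two (resp. three) further steps cover all of `[-1, 1)`.
-/

open Set Filter Topology

noncomputable def mobius (α β γ δ y : ℝ) : ℝ := (α * y + β) / (γ * y + δ)

section Mobius

variable {α β γ δ : ℝ}

lemma mobius_strictMonoOn (hdet : 0 < α * δ - β * γ) :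
    StrictMonoOn (mobius α β γ δ) {y | 0 < γ * y + δ} := by
  intro p (hp : 0 < γ * p + δ) q (hq : 0 < γ * q + δ) hpq
  rw [mobius, mobius, div_lt_div_iff₀ hp hq]
  nlinarith [mul_pos hdet (sub_pos.2 hpq)]

lemma mobius_continuousOn : ContinuousOn (mobius α β γ δ) {y | 0 < γ * y + δ} :=
  ContinuousOn.div (by fun_prop) (by fun_prop) fun _ hy ↦ hy.ne'

lemma mobius_div {a b : ℝ} (hb : b ≠ 0) :
    mobius α β γ δ (a / b) = (α * a + β * b) / (γ * a + δ * b) := by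
  rw [mobius, ← mul_div_mul_right _ _ hb]
  congr 1 <;> field_simp

end Mobius

lemma image_Ico_of_strictMonoOn {g : ℝ → ℝ} {c d : ℝ} (hcd : c ≤ d)
    (hcont : ContinuousOn g (Icc c d)) (hmono : StrictMonoOn g (Icc c d)) :
    g '' Ico c d = Ico (g c) (g d) := by
  refine (intermediate_value_Ico hcd hcont).antisymm' ?_
  rintro _ ⟨y, hy, rfl⟩
  exact ⟨hmono.monotoneOn (left_mem_Icc.2 hcd) (Ico_subset_Icc_self hy) hy.1,
    hmono (Ico_subset_Icc_self hy) (right_mem_Icc.2 hcd) hy.2⟩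

lemma nhdsGE_le_map_of_strictMonoOn {g : ℝ → ℝ} {x b : ℝ} (hxb : x < b)
    (hcont : ContinuousOn g (Icc x b)) (hmono : StrictMonoOn g (Icc x b)) :
    𝓝[≥] (g x) ≤ map g (𝓝[≥] x) := by
  intro T hT
  obtain ⟨e, he, hsub⟩ := mem_nhdsGE_iff_exists_Ico_subset.1 (mem_map.1 hT)
  have hxe : x < min e b := lt_min he hxb
  have hsub' : Icc x (min e b) ⊆ Icc x b := Icc_subset_Icc_right (min_le_right _ _)
  rw [← image_subset_iff] at hsub
  refine mem_of_superset (Ico_mem_nhdsGE (hmono (left_mem_Icc.2 hxb.le)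
    (hsub' (right_mem_Icc.2 hxe.le)) hxe)) ?_
  calc Ico (g x) (g (min e b)) ⊆ g '' Ico x (min e b) :=
        intermediate_value_Ico hxe.le (hcont.mono hsub')
    _ ⊆ g '' Ico x e := image_mono (Ico_subset_Ico_right (min_le_left _ _))
    _ ⊆ T := hsub

section MobiusPiece

variable {f : ℝ → ℝ} {α β γ δ : ℝ}

lemma image_Ico_eq_of_eqOn_mobius (hdet : 0 < α * δ - β * γ) {c d : ℝ} (hcd : c ≤ d)
    (hc : 0 < γ * c + δ) (hd : 0 < γ * d + δ) (hf : EqOn f (mobius α β γ δ) (Ico c d)) :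
    f '' Ico c d = Ico (mobius α β γ δ c) (mobius α β γ δ d) := by
  have hpos : Icc c d ⊆ {y | 0 < γ * y + δ} := fun y hy ↦ show 0 < γ * y + δ by
    rcases le_total 0 γ with h | h
    · linarith [mul_le_mul_of_nonneg_left hy.1 h]
    · linarith [mul_le_mul_of_nonpos_left hy.2 h]
  rw [hf.image_eq]
  exact image_Ico_of_strictMonoOn hcd (mobius_continuousOn.mono hpos)
    ((mobius_strictMonoOn hdet).mono hpos)

lemma nhdsGE_le_map_of_eqOn_mobius (hdet : 0 < α * δ - β * γ) {s : Set ℝ} {x : ℝ}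
    (hs : s ∈ 𝓝[≥] x) (hf : EqOn f (mobius α β γ δ) s) (hx : 0 < γ * x + δ) :
    𝓝[≥] (f x) ≤ map f (𝓝[≥] x) := by
  have hfg : f =ᶠ[𝓝[≥] x] mobius α β γ δ := eventuallyEq_of_mem hs hf
  rw [map_congr hfg, hfg.eq_of_nhdsWithin self_mem_Ici]
  obtain ⟨b, hxb, hsub⟩ := mem_nhdsGE_iff_exists_Icc_subset.1 <| mem_nhdsWithin_of_mem_nhds <|
    (isOpen_lt continuous_const (by fun_prop : Continuous fun y ↦ γ * y + δ)).mem_nhds hx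
  exact nhdsGE_le_map_of_strictMonoOn hxb (mobius_continuousOn.mono hsub)
    ((mobius_strictMonoOn hdet).mono hsub)

end MobiusPiece

lemma Filter.le_map_iterate {X : Type*} {l : X → Filter X} {f : X → X}
    (hf : ∀ x, l (f x) ≤ map f (l x)) (n : ℕ) (x : X) : l (f^[n] x) ≤ map f^[n] (l x) := by
  induction n generalizing x with
  | zero => simp
  | succ n ih =>
    rw [Function.iterate_succ_apply, Function.iterate_succ, ← map_map]
    exact (ih (f x)).trans (map_mono (hf x))

lemma Antitone.of_uniform_step {P : ℝ → Prop} (hP : Antitone P) {t θ δ : ℝ} (hδ : 0 < δ)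
    (ht : P t) (hstep : ∀ s ∈ Icc t θ, P s → P (s + δ)) : P θ := by
  rcases lt_or_ge θ t with hθ | htθ
  · exact hP hθ.le ht
  have key : ∀ k : ℕ, P (min (t + k * δ) θ) := by
    intro k
    induction k with
    | zero => simpa [min_eq_left htθ] using ht
    | succ k ih =>
      have hkδ : (0 : ℝ) ≤ k * δ := by positivity
      refine hP ?_ (hstep _ ⟨le_min (by linarith) htθ, min_le_right _ _⟩ ih)
      push_cast
      rcases le_total (t + (k : ℝ) * δ) θ with h | h
      · rw [min_eq_left h]; linarith [min_le_left (t + ((k : ℝ) + 1) * δ) θ]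
      · rw [min_eq_right h]; linarith [min_le_right (t + ((k : ℝ) + 1) * δ) θ]
  obtain ⟨k, hk⟩ := exists_nat_ge ((θ - t) / δ)
  rw [div_le_iff₀ hδ] at hk
  simpa [min_eq_right (by linarith : θ ≤ t + k * δ)] using key k

lemma exists_rat_mem_nhdsGE {s : Set ℝ} {x : ℝ} (hs : s ∈ 𝓝[≥] x) :
    ∃ q : ℚ, s ∈ 𝓝[≥] (q : ℝ) := by
  obtain ⟨c, hxc, hsub⟩ := mem_nhdsGE_iff_exists_Ico_subset.1 hs
  obtain ⟨q, hxq, hqc⟩ := exists_rat_btwn (show x < c from hxc)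
  exact ⟨q, mem_of_superset (Ico_mem_nhdsGE hqc) ((Ico_subset_Ico_left hxq.le).trans hsub)⟩

lemma subset_image_iterate_succ {X : Type*} {f : X → X} {A B C : Set X} {k : ℕ}
    (hA : A ⊆ f '' B) (hB : B ⊆ f^[k] '' C) : A ⊆ f^[k + 1] '' C := by
  rw [Function.iterate_succ', image_comp]
  exact hA.trans (image_mono hB)

lemma exists_int_div_eq_of_mem_Ico {q : ℚ} (hq : (q : ℝ) ∈ Ico (-1) 1) :
    ∃ a b : ℤ, -b ≤ a ∧ a < b ∧ (q : ℝ) = a / b := by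
  have hden : (0 : ℝ) < (q.den : ℤ) := by exact_mod_cast q.pos
  rw [Rat.cast_def, ← Int.cast_natCast, mem_Ico, le_div_iff₀ hden, div_lt_iff₀ hden] at hq
  exact ⟨q.num, q.den, by exact_mod_cast (by linarith : -((q.den : ℤ) : ℝ) ≤ q.num),
    by exact_mod_cast (by linarith : (q.num : ℝ) < (q.den : ℤ)), by rw [Rat.cast_def]; norm_cast⟩

lemma exists_Ico_zero_subset_iterate_image {f : ℝ → ℝ}
    (hleft : EqOn f (mobius 2 1 (-1) 0) (Ico (-1) (-1/2))) {U : Set ℝ} {t : ℝ} (ht : -1 < t)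
    (hU : ∃ n, Ico (-1) t ⊆ f^[n] '' U) : ∃ n, Ico (-1) 0 ⊆ f^[n] '' U := by
  set P : ℝ → Prop := fun s ↦ ∃ n, Ico (-1) s ⊆ f^[n] '' U
  have hP : Antitone P := fun s s' hss' ⟨n, hn⟩ ↦ ⟨n, (Ico_subset_Ico_right hss').trans hn⟩
  have hstep : ∀ s ∈ Icc (-1 : ℝ) (-1/2), P s → P (mobius 2 1 (-1) 0 s) := by
    rintro s ⟨hs₁, hs₂⟩ ⟨n, hn⟩
    refine ⟨n + 1, subset_image_iterate_succ ?_ hn⟩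
    rw [image_Ico_eq_of_eqOn_mobius (by norm_num) hs₁ (by norm_num) (by linarith)
      (hleft.mono (Ico_subset_Ico_right hs₂))]
    norm_num [mobius]
  have hgain : ∀ s ∈ Icc t (-1/2), s + (t + 1) ^ 2 ≤ mobius 2 1 (-1) 0 s := by
    rintro s ⟨hts, hs⟩
    rw [mobius, le_div_iff₀ (by linarith)]
    nlinarith [mul_self_le_mul_self (by linarith : 0 ≤ t + 1) (by linarith : t + 1 ≤ s + 1),
      mul_nonneg (by linarith : 0 ≤ s + 1) (sq_nonneg (t + 1))]
  have hhalf : P (-1/2) := hP.of_uniform_step (pow_pos (by linarith) 2) hU fun s hs hPs ↦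
    hP (hgain s hs) (hstep s ⟨by linarith [hs.1], hs.2⟩ hPs)
  have hzero : mobius 2 1 (-1) 0 (-1/2) = 0 := by norm_num [mobius]
  exact hzero ▸ hstep (-1/2) ⟨by norm_num, le_rfl⟩ hhalf

theorem exists_iterate_div_eq_neg_one {f : ℝ → ℝ} (h₀ : f 0 = -1)
    (hstep : ∀ a b : ℤ, -b < a → a < b → a ≠ 0 →
      ∃ (k : ℕ) (a' b' : ℤ), -b' ≤ a' ∧ a' < b' ∧ b' < b ∧ f^[k] (a / b) = a' / b')
    (a b : ℤ) (h₁ : -b ≤ a) (h₂ : a < b) : ∃ n, f^[n] (a / b) = -1 := by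
  rcases h₁.eq_or_lt with rfl | h₁
  · have hb : (b : ℝ) ≠ 0 := by exact_mod_cast (by omega : b ≠ 0)
    exact ⟨0, by simp [hb]⟩
  rcases eq_or_ne a 0 with rfl | ha
  · exact ⟨1, by simpa using h₀⟩
  obtain ⟨k, a', b', h₁', h₂', hb', hk⟩ := hstep a b h₁ h₂ ha
  obtain ⟨n, hn⟩ := exists_iterate_div_eq_neg_one h₀ hstep a' b' h₁' h₂'
  exact ⟨n + k, by rw [Function.iterate_add_apply, hk, hn]⟩
termination_by b.toNat
decreasing_by omega

theorem exists_Ico_subset_iterate_image {f : ℝ → ℝ}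
    (hopen : ∀ x, 𝓝[≥] (f x) ≤ map f (𝓝[≥] x))
    (hrat : ∀ a b : ℤ, -b ≤ a → a < b → ∃ n, f^[n] (a / b) = -1)
    (hleft : EqOn f (mobius 2 1 (-1) 0) (Ico (-1) (-1/2)))
    (hcover : ∃ k, Ico (-1) 1 ⊆ f^[k] '' Ico (-1) 0)
    {U : Set ℝ} {x : ℝ} (hx : x ∈ Ico (-1) 1) (hU : U ∈ 𝓝[≥] x) :
    ∃ n, Ico (-1) 1 ⊆ f^[n] '' U := by
  obtain ⟨q, hq⟩ := exists_rat_mem_nhdsGE (inter_mem hU (Ico_mem_nhdsGE_of_mem hx))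
  obtain ⟨a, b, hab₁, hab₂, hqab⟩ :=
    exists_int_div_eq_of_mem_Ico (mem_of_mem_nhdsWithin self_mem_Ici hq).2
  obtain ⟨n, hn⟩ := hrat a b hab₁ hab₂
  have hnhds := Filter.le_map_iterate hopen n q (image_mem_map hq)
  rw [hqab, hn] at hnhds
  obtain ⟨t, ht, hsub⟩ := mem_nhdsGE_iff_exists_Ico_subset.1 hnhds
  obtain ⟨m, hm⟩ := exists_Ico_zero_subset_iterate_image hleft ht
    ⟨n, hsub.trans (image_mono inter_subset_left)⟩
  obtain ⟨k, hk⟩ := hcover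
  exact ⟨k + m, by rw [Function.iterate_add, image_comp]; exact hk.trans (image_mono hm)⟩

lemma exists_iterate_image_inter_nonempty {f : ℝ → ℝ}
    (hf : ∀ x ∈ Ico (-1 : ℝ) 1, ∀ U ∈ 𝓝[≥] x, ∃ n, Ico (-1) 1 ⊆ f^[n] '' U) {U V : Set ℝ}
    (hU : ∃ O : Set ℝ, IsOpen O ∧ U = O ∩ Ico (-1 : ℝ) 1) (hV : V ⊆ Ico (-1) 1)
    (hU' : U.Nonempty) (hV' : V.Nonempty) : ∃ n, (f^[n] '' U ∩ V).Nonempty := by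
  obtain ⟨O, hO, rfl⟩ := hU
  obtain ⟨u, hu⟩ := hU'
  obtain ⟨n, hn⟩ := hf u hu.2 _ (inter_mem (mem_nhdsWithin_of_mem_nhds (hO.mem_nhds hu.1))
    (Ico_mem_nhdsGE_of_mem hu.2))
  obtain ⟨v, hv⟩ := hV'
  exact ⟨n, v, hn (hV hv), hv⟩

lemma fA_eqOn_Iio_neg_half : EqOn fA (mobius 2 1 (-1) 0) (Iio (-1/2)) := by
  intro y (hy : y < -1/2)
  have : y ≠ 0 := by linarith
  rw [fA, if_pos hy, Ttilde, if_pos hy.le, mobius, eq_div_iff (by linarith)]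
  field_simp
  ring

lemma fA_eqOn_Ico_neg_half_zero : EqOn fA (mobius 1 1 0 1) (Ico (-1/2) 0) := by
  rintro y ⟨hy₁, hy₂⟩
  rw [fA, if_neg hy₁.not_gt, if_pos (by linarith), Stilde, if_pos hy₂, mobius]
  ring

lemma fA_eqOn_Ico_zero_half : EqOn fA (mobius 1 (-1) 0 1) (Ico 0 (1/2)) := by
  rintro y ⟨hy₁, hy₂⟩
  rw [fA, if_neg (by linarith), if_pos hy₂, Stilde, if_neg hy₁.not_gt, mobius]
  rcases hy₁.eq_or_lt with rfl | hy₁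
  · norm_num
  · rw [if_neg hy₁.ne']
    ring

lemma fA_eqOn_Ici_half : EqOn fA (mobius 2 (-1) 1 0) (Ici (1/2)) := by
  intro y (hy : 1/2 ≤ y)
  rw [fA, if_neg (by linarith), if_neg hy.not_gt, Tinvtilde, if_neg (by linarith), mobius]
  rcases hy.eq_or_lt with rfl | hy
  · norm_num
  · have : y ≠ 0 := by linarith
    rw [if_neg hy.not_ge]
    field_simp
    ring

lemma fA_nhdsGE_le_map (x : ℝ) : 𝓝[≥] (fA x) ≤ map fA (𝓝[≥] x) := by
  rcases lt_or_ge x (-1/2) with h₁ | h₁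
  · exact nhdsGE_le_map_of_eqOn_mobius (by norm_num)
      (mem_nhdsWithin_of_mem_nhds (Iio_mem_nhds h₁)) fA_eqOn_Iio_neg_half (by linarith)
  rcases lt_or_ge x 0 with h₂ | h₂
  · exact nhdsGE_le_map_of_eqOn_mobius (by norm_num) (Ico_mem_nhdsGE_of_mem ⟨h₁, h₂⟩)
      fA_eqOn_Ico_neg_half_zero (by norm_num)
  rcases lt_or_ge x (1/2) with h₃ | h₃
  · exact nhdsGE_le_map_of_eqOn_mobius (by norm_num) (Ico_mem_nhdsGE_of_mem ⟨h₂, h₃⟩)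
      fA_eqOn_Ico_zero_half (by norm_num)
  · exact nhdsGE_le_map_of_eqOn_mobius (by norm_num)
      (mem_of_superset self_mem_nhdsWithin (Ici_subset_Ici.2 h₃)) fA_eqOn_Ici_half (by linarith)

lemma fA_iterate_two_eqOn_Ico_neg_half_zero : EqOn fA^[2] (mobius 2 1 1 1) (Ico (-1/2) 0) := by
  intro y hy
  have hy' : mobius 1 1 0 1 y ∈ Ici (1/2) := by simp [mobius]; linarith [hy.1]
  have : y + 1 ≠ 0 := by linarith [hy.1]
  rw [Function.iterate_succ_apply', Function.iterate_one, fA_eqOn_Ico_neg_half_zero hy,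
    fA_eqOn_Ici_half hy']
  norm_num [mobius]
  field_simp
  ring

lemma fA_iterate_two_eqOn_Ico_zero_half : EqOn fA^[2] (mobius 2 (-1) (-1) 1) (Ico 0 (1/2)) := by
  intro y hy
  have hy' : mobius 1 (-1) 0 1 y ∈ Iio (-1/2) := by simp [mobius]; linarith [hy.2]
  have : 1 - y ≠ 0 := by linarith [hy.2]
  rw [Function.iterate_succ_apply', Function.iterate_one, fA_eqOn_Ico_zero_half hy,
    fA_eqOn_Iio_neg_half hy']
  simp only [mobius]
  field_simp
  ring

lemma fA_exists_iterate_eq_div_lt_den (a b : ℤ) (h₁ : -b < a) (h₂ : a < b) (ha : a ≠ 0) :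
    ∃ (k : ℕ) (a' b' : ℤ), -b' ≤ a' ∧ a' < b' ∧ b' < b ∧ fA^[k] (a / b) = a' / b' := by
  have hb : (0 : ℝ) < b := by exact_mod_cast (by omega : (0 : ℤ) < b)
  rcases lt_or_ge (2 * a) (-b) with h | h
  · refine ⟨1, 2 * a + b, -a, by omega, by omega, by omega, ?_⟩
    rw [Function.iterate_one, fA_eqOn_Iio_neg_half, mobius_div hb.ne']
    · push_cast; ring
    · rw [mem_Iio, div_lt_iff₀ hb]; rify at h; linarith
  rcases ha.lt_or_gt with ha | ha
  · refine ⟨2, 2 * a + b, a + b, by omega, by omega, by omega, ?_⟩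
    rw [fA_iterate_two_eqOn_Ico_neg_half_zero, mobius_div hb.ne']
    · push_cast; ring
    · rw [mem_Ico, le_div_iff₀ hb, div_lt_iff₀ hb]; rify at h ha; constructor <;> linarith
  rcases lt_or_ge (2 * a) b with h' | h'
  · refine ⟨2, 2 * a - b, b - a, by omega, by omega, by omega, ?_⟩
    rw [fA_iterate_two_eqOn_Ico_zero_half, mobius_div hb.ne']
    · push_cast; ring
    · rw [mem_Ico, le_div_iff₀ hb, div_lt_iff₀ hb]; rify at h' ha; constructor <;> linarith
  · refine ⟨1, 2 * a - b, a, by omega, by omega, by omega, ?_⟩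
    rw [Function.iterate_one, fA_eqOn_Ici_half, mobius_div hb.ne']
    · push_cast; ring
    · rw [mem_Ici, le_div_iff₀ hb]; rify at h'; linarith

lemma Ico_subset_fA_iterate_image : Ico (-1) 1 ⊆ fA^[2] '' Ico (-1) 0 := by
  have e₁ : fA '' Ico (-1) (-1/2) = Ico (-1) 0 := by
    rw [image_Ico_eq_of_eqOn_mobius (by norm_num) (by norm_num) (by norm_num) (by norm_num)
      (fA_eqOn_Iio_neg_half.mono Ico_subset_Iio_self)]
    norm_num [mobius]
  have e₂ : fA '' Ico (-1/2) 0 = Ico (1/2) 1 := by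
    rw [image_Ico_eq_of_eqOn_mobius (by norm_num) (by norm_num) (by norm_num) (by norm_num)
      fA_eqOn_Ico_neg_half_zero]
    norm_num [mobius]
  have e₃ : fA '' Ico (1/2) 1 = Ico 0 1 := by
    rw [image_Ico_eq_of_eqOn_mobius (by norm_num) (by norm_num) (by norm_num) (by norm_num)
      (fA_eqOn_Ici_half.mono Ico_subset_Ici_self)]
    norm_num [mobius]
  have h₁ : Ico (-1) (-1/2) ∪ Ico (1/2) 1 ⊆ fA '' Ico (-1) 0 := by
    rw [← Ico_union_Ico_eq_Ico (by norm_num : (-1 : ℝ) ≤ -1/2) (by norm_num : (-1/2 : ℝ) ≤ 0),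
      image_union, e₁, e₂]
    exact union_subset_union_left _ (Ico_subset_Ico_right (by norm_num))
  have h₂ : Ico (-1) 1 ⊆ fA '' (Ico (-1) (-1/2) ∪ Ico (1/2) 1) := by
    rw [image_union, e₁, e₃, Ico_union_Ico_eq_Ico (by norm_num) (by norm_num)]
  exact subset_image_iterate_succ h₂ (subset_image_iterate_succ h₁ (by simp))

theorem fA_exists_Ico_subset_iterate_image :
    ∀ x ∈ Ico (-1 : ℝ) 1, ∀ U ∈ 𝓝[≥] x, ∃ n, Ico (-1) 1 ⊆ fA^[n] '' U :=
  fun _ hx _ hU ↦ exists_Ico_subset_iterate_image fA_nhdsGE_le_map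
    (exists_iterate_div_eq_neg_one (by norm_num [fA, Stilde]) fA_exists_iterate_eq_div_lt_den)
    (fA_eqOn_Iio_neg_half.mono Ico_subset_Iio_self) ⟨2, Ico_subset_fA_iterate_image⟩ hx hU

lemma fH_eqOn_Iio_neg_half : EqOn fH (mobius 2 1 (-1) 0) (Iio (-1/2)) := by
  intro y (hy : y < -1/2)
  have : y ≠ 0 := by linarith
  rw [fH, if_pos (by linarith), Ttilde, if_pos hy.le, mobius, eq_div_iff (by linarith)]
  field_simp
  ring

lemma fH_eqOn_Ico_neg_half_neg_third : EqOn fH (mobius 2 1 3 2) (Ico (-1/2) (-1/3)) := by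
  rintro y ⟨hy₁, hy₂⟩
  rw [fH, if_pos hy₂, Ttilde, mobius]
  rcases hy₁.eq_or_lt with rfl | hy₁
  · norm_num
  · have : 3 * y + 2 ≠ 0 := by linarith
    rw [if_neg hy₁.not_ge, if_pos (by linarith)]
    field_simp
    ring

lemma fH_eqOn_Ico_neg_third_zero : EqOn fH (mobius 1 1 0 1) (Ico (-1/3) 0) := by
  rintro y ⟨hy₁, hy₂⟩
  rw [fH, if_neg hy₁.not_gt, if_pos (by linarith), Stilde, if_pos hy₂, mobius]
  ring

lemma fH_eqOn_Ico_zero_third : EqOn fH (mobius 1 (-1) 0 1) (Ico 0 (1/3)) := by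
  rintro y ⟨hy₁, hy₂⟩
  rw [fH, if_neg (by linarith), if_pos hy₂, Stilde, if_neg hy₁.not_gt, mobius]
  rcases hy₁.eq_or_lt with rfl | hy₁
  · norm_num
  · rw [if_neg hy₁.ne']
    ring

lemma fH_eqOn_Ico_third_half : EqOn fH (mobius 2 (-1) (-3) 2) (Ico (1/3) (1/2)) := by
  rintro y ⟨hy₁, hy₂⟩
  have : 3 * y - 2 ≠ 0 := by linarith
  rw [fH, if_neg (by linarith), if_neg hy₁.not_gt, Tinvtilde, if_neg (by linarith),
    if_pos hy₂.le, mobius, div_eq_div_iff this (by linarith)]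
  ring

lemma fH_eqOn_Ici_half : EqOn fH (mobius 2 (-1) 1 0) (Ici (1/2)) := by
  intro y (hy : 1/2 ≤ y)
  rw [fH, if_neg (by linarith), if_neg (by linarith), Tinvtilde, if_neg (by linarith), mobius]
  rcases hy.eq_or_lt with rfl | hy
  · norm_num
  · have : y ≠ 0 := by linarith
    rw [if_neg hy.not_ge]
    field_simp
    ring

lemma fH_nhdsGE_le_map (x : ℝ) : 𝓝[≥] (fH x) ≤ map fH (𝓝[≥] x) := by
  rcases lt_or_ge x (-1/2) with h₁ | h₁
  · exact nhdsGE_le_map_of_eqOn_mobius (by norm_num)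
      (mem_nhdsWithin_of_mem_nhds (Iio_mem_nhds h₁)) fH_eqOn_Iio_neg_half (by linarith)
  rcases lt_or_ge x (-1/3) with h₂ | h₂
  · exact nhdsGE_le_map_of_eqOn_mobius (by norm_num) (Ico_mem_nhdsGE_of_mem ⟨h₁, h₂⟩)
      fH_eqOn_Ico_neg_half_neg_third (by linarith)
  rcases lt_or_ge x 0 with h₃ | h₃
  · exact nhdsGE_le_map_of_eqOn_mobius (by norm_num) (Ico_mem_nhdsGE_of_mem ⟨h₂, h₃⟩)
      fH_eqOn_Ico_neg_third_zero (by norm_num)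
  rcases lt_or_ge x (1/3) with h₄ | h₄
  · exact nhdsGE_le_map_of_eqOn_mobius (by norm_num) (Ico_mem_nhdsGE_of_mem ⟨h₃, h₄⟩)
      fH_eqOn_Ico_zero_third (by norm_num)
  rcases lt_or_ge x (1/2) with h₅ | h₅
  · exact nhdsGE_le_map_of_eqOn_mobius (by norm_num) (Ico_mem_nhdsGE_of_mem ⟨h₄, h₅⟩)
      fH_eqOn_Ico_third_half (by linarith)
  · exact nhdsGE_le_map_of_eqOn_mobius (by norm_num)
      (mem_of_superset self_mem_nhdsWithin (Ici_subset_Ici.2 h₅)) fH_eqOn_Ici_half (by linarith)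

lemma fH_iterate_two_eqOn_Ico_neg_third_zero :
    EqOn fH^[2] (mobius 2 1 1 1) (Ico (-1/3) 0) := by
  intro y hy
  have hy' : mobius 1 1 0 1 y ∈ Ici (1/2) := by simp [mobius]; linarith [hy.1]
  have : y + 1 ≠ 0 := by linarith [hy.1]
  rw [Function.iterate_succ_apply', Function.iterate_one, fH_eqOn_Ico_neg_third_zero hy,
    fH_eqOn_Ici_half hy']
  norm_num [mobius]
  field_simp
  ring

lemma fH_iterate_two_eqOn_Ico_zero_third :
    EqOn fH^[2] (mobius 2 (-1) (-1) 1) (Ico 0 (1/3)) := by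
  intro y hy
  have hy' : mobius 1 (-1) 0 1 y ∈ Iio (-1/2) := by simp [mobius]; linarith [hy.2]
  have : 1 - y ≠ 0 := by linarith [hy.2]
  rw [Function.iterate_succ_apply', Function.iterate_one, fH_eqOn_Ico_zero_third hy,
    fH_eqOn_Iio_neg_half hy']
  simp only [mobius]
  field_simp
  ring

lemma fH_iterate_three_third : fH^[3] (1/3) = 1/2 := by
  norm_num [fH, Ttilde, Stilde, Tinvtilde]

lemma fH_exists_iterate_eq_div_lt_den (a b : ℤ) (h₁ : -b < a) (h₂ : a < b) (ha : a ≠ 0) :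
    ∃ (k : ℕ) (a' b' : ℤ), -b' ≤ a' ∧ a' < b' ∧ b' < b ∧ fH^[k] (a / b) = a' / b' := by
  have hb : (0 : ℝ) < b := by exact_mod_cast (by omega : (0 : ℤ) < b)
  rcases lt_or_ge (2 * a) (-b) with h | h
  · refine ⟨1, 2 * a + b, -a, by omega, by omega, by omega, ?_⟩
    rw [Function.iterate_one, fH_eqOn_Iio_neg_half, mobius_div hb.ne']
    · push_cast; ring
    · rw [mem_Iio, div_lt_iff₀ hb]; rify at h; linarith
  rcases lt_or_ge (3 * a) (-b) with h' | h'
  · refine ⟨1, 2 * a + b, 3 * a + 2 * b, by omega, by omega, by omega, ?_⟩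
    rw [Function.iterate_one, fH_eqOn_Ico_neg_half_neg_third, mobius_div hb.ne']
    · push_cast; ring
    · rw [mem_Ico, le_div_iff₀ hb, div_lt_iff₀ hb]; rify at h h'; constructor <;> linarith
  rcases ha.lt_or_gt with ha | ha
  · refine ⟨2, 2 * a + b, a + b, by omega, by omega, by omega, ?_⟩
    rw [fH_iterate_two_eqOn_Ico_neg_third_zero, mobius_div hb.ne']
    · push_cast; ring
    · rw [mem_Ico, le_div_iff₀ hb, div_lt_iff₀ hb]; rify at h' ha; constructor <;> linarith
  rcases lt_trichotomy (3 * a) b with h'' | h'' | h''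
  · refine ⟨2, 2 * a - b, b - a, by omega, by omega, by omega, ?_⟩
    rw [fH_iterate_two_eqOn_Ico_zero_third, mobius_div hb.ne']
    · push_cast; ring
    · rw [mem_Ico, le_div_iff₀ hb, div_lt_iff₀ hb]; rify at h'' ha; constructor <;> linarith
  · -- `T̃⁻¹` keeps the denominator of `1/3`, but `1/3 ↦ -1/3 ↦ 2/3 ↦ 1/2`.
    refine ⟨3, 1, 2, by omega, by omega, by omega, ?_⟩
    have hx : (a : ℝ) / b = 1/3 := by
      rw [← h'']; push_cast; field_simp
    rw [hx, fH_iterate_three_third]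
    norm_num
  rcases lt_or_ge (2 * a) b with h''' | h'''
  · refine ⟨1, 2 * a - b, 2 * b - 3 * a, by omega, by omega, by omega, ?_⟩
    rw [Function.iterate_one, fH_eqOn_Ico_third_half, mobius_div hb.ne']
    · push_cast; ring
    · rw [mem_Ico, le_div_iff₀ hb, div_lt_iff₀ hb]; rify at h'' h'''; constructor <;> linarith
  · refine ⟨1, 2 * a - b, a, by omega, by omega, by omega, ?_⟩
    rw [Function.iterate_one, fH_eqOn_Ici_half, mobius_div hb.ne']
    · push_cast; ring
    · rw [mem_Ici, le_div_iff₀ hb]; rify at h'''; linarith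

lemma Ico_subset_fH_iterate_image : Ico (-1) 1 ⊆ fH^[3] '' Ico (-1) 0 := by
  have e₁ : fH '' Ico (-1) (-1/2) = Ico (-1) 0 := by
    rw [image_Ico_eq_of_eqOn_mobius (by norm_num) (by norm_num) (by norm_num) (by norm_num)
      (fH_eqOn_Iio_neg_half.mono Ico_subset_Iio_self)]
    norm_num [mobius]
  have e₂ : fH '' Ico (-1/2) (-1/3) = Ico 0 (1/3) := by
    rw [image_Ico_eq_of_eqOn_mobius (by norm_num) (by norm_num) (by norm_num) (by norm_num)
      fH_eqOn_Ico_neg_half_neg_third]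
    norm_num [mobius]
  have e₃ : fH '' Ico (-1/3) 0 = Ico (2/3) 1 := by
    rw [image_Ico_eq_of_eqOn_mobius (by norm_num) (by norm_num) (by norm_num) (by norm_num)
      fH_eqOn_Ico_neg_third_zero]
    norm_num [mobius]
  have e₄ : fH '' Ico (2/3) 1 = Ico (1/2) 1 := by
    rw [image_Ico_eq_of_eqOn_mobius (by norm_num) (by norm_num) (by norm_num) (by norm_num)
      (fH_eqOn_Ici_half.mono (Ico_subset_Ici_self.trans (Ici_subset_Ici.2 (by norm_num))))]
    norm_num [mobius]
  have e₅ : fH '' Ico (1/2) 1 = Ico 0 1 := by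
    rw [image_Ico_eq_of_eqOn_mobius (by norm_num) (by norm_num) (by norm_num) (by norm_num)
      (fH_eqOn_Ici_half.mono Ico_subset_Ici_self)]
    norm_num [mobius]
  have hS : Ico (-1) (1/3) ⊆ fH '' Ico (-1) 0 := by
    rw [← Ico_union_Ico_eq_Ico (by norm_num : (-1 : ℝ) ≤ 0) (by norm_num : (0 : ℝ) ≤ 1/3)]
    exact union_subset (e₁.symm.subset.trans (image_mono (Ico_subset_Ico_right (by norm_num))))
      (e₂.symm.subset.trans (image_mono (Ico_subset_Ico (by norm_num) (by norm_num))))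
  have hS' : Ico (-1) (1/3) ⊆ fH '' Ico (-1) (1/3) :=
    hS.trans (image_mono (Ico_subset_Ico_right (by norm_num)))
  have h₁ : Ico (-1) (1/3) ∪ Ico (2/3) 1 ⊆ fH '' Ico (-1) 0 :=
    union_subset hS (e₃.symm.subset.trans (image_mono (Ico_subset_Ico (by norm_num) le_rfl)))
  have h₂ : Ico (-1) (1/3) ∪ Ico (1/2) 1 ⊆ fH '' (Ico (-1) (1/3) ∪ Ico (2/3) 1) := by
    rw [image_union, e₄]
    exact union_subset_union_left _ hS'
  have h₃ : Ico (-1) 1 ⊆ fH '' (Ico (-1) (1/3) ∪ Ico (1/2) 1) := by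
    rw [image_union, e₅, ← Ico_union_Ico_eq_Ico (by norm_num : (-1 : ℝ) ≤ 0) (by norm_num)]
    exact union_subset_union_left _ ((Ico_subset_Ico_right (by norm_num)).trans hS')
  exact subset_image_iterate_succ h₃ (subset_image_iterate_succ h₂
    (subset_image_iterate_succ h₁ (by simp)))

theorem fH_exists_Ico_subset_iterate_image :
    ∀ x ∈ Ico (-1 : ℝ) 1, ∀ U ∈ 𝓝[≥] x, ∃ n, Ico (-1) 1 ⊆ fH^[n] '' U :=
  fun _ hx _ hU ↦ exists_Ico_subset_iterate_image fH_nhdsGE_le_map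
    (exists_iterate_div_eq_neg_one (by norm_num [fH, Stilde]) fH_exists_iterate_eq_div_lt_den)
    (fH_eqOn_Iio_neg_half.mono Ico_subset_Iio_self) ⟨3, Ico_subset_fH_iterate_image⟩ hx hU

/-- Both the Artin map `f̃_A` and the Hurwitz map `f̃_H` are topologically transitive on
`[-1,1)`: for every pair of nonempty relatively open subsets `U, V` of `[-1,1)` there is an
`n ≥ 0` with `f̃ⁿ(U) ∩ V ≠ ∅`. -/
theorem artin_hurwitz_topologically_transitive :
    (∀ U V : Set ℝ,
      (∃ O : Set ℝ, IsOpen O ∧ U = O ∩ Set.Ico (-1 : ℝ) 1) →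
      (∃ O : Set ℝ, IsOpen O ∧ V = O ∩ Set.Ico (-1 : ℝ) 1) →
      U.Nonempty → V.Nonempty →
      ∃ n : ℕ, (fA^[n] '' U ∩ V).Nonempty) ∧
    (∀ U V : Set ℝ,
      (∃ O : Set ℝ, IsOpen O ∧ U = O ∩ Set.Ico (-1 : ℝ) 1) →
      (∃ O : Set ℝ, IsOpen O ∧ V = O ∩ Set.Ico (-1 : ℝ) 1) →
      U.Nonempty → V.Nonempty →
      ∃ n : ℕ, (fH^[n] '' U ∩ V).Nonempty) := by
  refine ⟨fun U V hU ⟨O, _, hV⟩ hU' hV' ↦ ?_, fun U V hU ⟨O, _, hV⟩ hU' hV' ↦ ?_⟩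
  · exact exists_iterate_image_inter_nonempty fA_exists_Ico_subset_iterate_image hU
      (hV ▸ inter_subset_right) hU' hV'
  · exact exists_iterate_image_inter_nonempty fH_exists_Ico_subset_iterate_image hU
      (hV ▸ inter_subset_right) hU' hV'
end
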